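/- Cartan decomposition: let R be a discrete valuation ring with uniformiser ϖ and fraction field K. The group GL_n(K) is the disjoint union, over antitone functions f : Fin n → ℤ, of the double cosets GL_n(R) · diag(ϖ^f) · GL_n(R); that is, every g ∈ GL_n(K) lies in exactly one such double coset. -/

import Mathlib

open Matrix

/-- The diagonal matrix over `K` with `i`-th diagonal entry `ϖ ^ f i`, for `f : Fin n → ℤ`. -/
noncomputable def cartanDiag {R : Type*} [CommRing R] {K : Type*} [Field K] [Algebra R K]
    (ϖ : R) {n : ℕ} (f : Fin n → ℤ) : Matrix (Fin n) (Fin n) K :=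
  Matrix.diagonal fun i => (algebraMap R K ϖ) ^ (f i)

/-!
Existence: after clearing denominators, `g` becomes a matrix `M` over `R` with `det M ≠ 0`. Over the
PID `R`, the Smith normal form of the lattice `M Rⁿ ⊆ Rⁿ` gives `M = P · diag d · Q` with
`P, Q ∈ GLₙ(R)`, and each `d i` is a unit times a power of `ϖ`.

Uniqueness: if `ϖ ^ s` divides every `k × k` minor of a matrix, it divides every `k × k` minor
of the matrix multiplied on either side by anything over `R`. For `diag (ϖ ^ e)` the largest such
`s` is the sum of the `k` smallest exponents, so these partial sums, and hence the sorted
exponents, are invariants of the double coset.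
-/

theorem Fin.val_le_of_strictMono {k n : ℕ} {s : Fin k → Fin n} (hs : StrictMono s) (i : Fin k) :
    (i : ℕ) ≤ s i := by
  simpa [Fin.card_Iio] using Finset.card_le_card_of_injOn s (s := Finset.Iio i)
    (t := Finset.Iio (s i)) (fun x hx => by simpa using hs (by simpa using hx)) hs.injective.injOn

theorem Fin.sum_castLE_le_sum_comp {M : Type*} [AddCommMonoid M] [PartialOrder M]
    [IsOrderedAddMonoid M] {k n : ℕ} {e : Fin n → M} (he : Monotone e) (hk : k ≤ n)
    {c : Fin k → Fin n} (hc : c.Injective) :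
    ∑ i, e (Fin.castLE hk i) ≤ ∑ i, e (c i) := by
  set σ := Tuple.sort c
  have hsorted : StrictMono (c ∘ σ) :=
    (Tuple.monotone_sort c).strictMono_of_injective (hc.comp σ.injective)
  rw [← Equiv.sum_comp σ fun i => e (c i)]
  exact Finset.sum_le_sum fun i _ => he (Fin.val_le_of_strictMono hsorted i)

theorem Fin.eq_of_sum_castLE_eq {M : Type*} [AddCancelCommMonoid M] {n : ℕ} {e e' : Fin n → M}
    (h : ∀ k (hk : k ≤ n), ∑ i : Fin k, e (Fin.castLE hk i) = ∑ i : Fin k, e' (Fin.castLE hk i)) :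
    e = e' := by
  funext i
  have hi := h (i + 1) i.isLt
  simp only [Fin.sum_univ_castSucc, Fin.castLE_castSucc] at hi
  rw [h i i.isLt.le] at hi
  have hlast : Fin.castLE i.isLt (Fin.last i) = i := Fin.ext (by simp)
  simpa [hlast] using add_left_cancel hi

namespace Matrix

variable {R : Type*} [CommRing R]

section Minors

variable {l m n p : Type*}

def DvdMinors (x : R) (k : ℕ) (M : Matrix m n R) : Prop :=
  ∀ (r : Fin k → m) (c : Fin k → n), x ∣ (M.submatrix r c).det

variable {x : R} {k : ℕ}

theorem DvdMinors.mul_left [Fintype m] {M : Matrix m n R} (h : DvdMinors x k M)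
    (A : Matrix l m R) : DvdMinors x k (A * M) := by
  classical
  intro r c
  have hrows : (A * M).submatrix r c = of fun i => ∑ j, A (r i) j • fun i' => M j (c i') := by
    ext i i'
    simp [mul_apply, Finset.sum_apply]
  rw [hrows, det]
  change x ∣ detRowAlternating.toMultilinearMap fun i => ∑ j, A (r i) j • fun i' => M j (c i')
  rw [MultilinearMap.map_sum]
  refine Finset.dvd_sum fun φ _ => ?_
  rw [MultilinearMap.map_smul_univ, smul_eq_mul]
  exact (h φ c).mul_left _

theorem DvdMinors.transpose {M : Matrix m n R} (h : DvdMinors x k M) : DvdMinors x k Mᵀ :=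
  fun r c => by simpa [← transpose_submatrix, det_transpose] using h c r

theorem DvdMinors.mul_right [Fintype n] {M : Matrix m n R} (h : DvdMinors x k M)
    (B : Matrix n p R) : DvdMinors x k (M * B) := by
  simpa using (h.transpose.mul_left Bᵀ).transpose

theorem dvdMinors_diagonal_pow (ϖ : R) {n k : ℕ} {e : Fin n → ℕ} (he : Antitone e)
    (hk : k ≤ n) :
    DvdMinors (ϖ ^ ∑ i : Fin k, e (Fin.rev (Fin.castLE hk i))) k (diagonal fun i => ϖ ^ e i) := by
  intro r c
  by_cases hc : c.Injective
  · have hcols : (diagonal fun i => ϖ ^ e i).submatrix r c =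
        of fun i j => ϖ ^ e (c j) * (1 : Matrix (Fin n) (Fin n) R).submatrix r c i j := by
      ext i j
      by_cases h : r i = c j <;> simp [one_apply, h]
    -- for antitone `e` the `k` smallest exponents sit at the last `k` indices
    have hsum := Fin.sum_castLE_le_sum_comp (he.comp Fin.rev_anti) hk
      (Fin.rev_injective.comp hc)
    simp only [Function.comp_apply, Fin.rev_rev] at hsum
    rw [hcols, det_mul_row, Finset.prod_pow_eq_pow_sum]
    exact (pow_dvd_pow ϖ hsum).mul_right _
  · obtain ⟨j, j', hjj', hne⟩ := Function.not_injective_iff.mp hc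
    rw [det_zero_of_column_eq hne fun i => by simp [hjj']]
    exact dvd_zero _

end Minors

section ElementaryDivisors

variable [IsDomain R] {ϖ : R} {n : ℕ}

theorem sum_le_of_mul_diagonal_pow_mul_eq (hϖ : Irreducible ϖ) {e e' : Fin n → ℕ}
    (he : Antitone e) {k₁ k₂ l₁ l₂ : GL (Fin n) R}
    (h : (k₁ : Matrix (Fin n) (Fin n) R) * diagonal (fun i => ϖ ^ e i) * (k₂ : Matrix _ _ R) =
      (l₁ : Matrix (Fin n) (Fin n) R) * diagonal (fun i => ϖ ^ e' i) * (l₂ : Matrix _ _ R))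
    {k : ℕ} (hk : k ≤ n) :
    ∑ i : Fin k, e (Fin.rev (Fin.castLE hk i)) ≤ ∑ i : Fin k, e' (Fin.rev (Fin.castLE hk i)) := by
  have hD' : (diagonal fun i => ϖ ^ e' i) = (↑l₁⁻¹ : Matrix (Fin n) (Fin n) R) *
      ((k₁ : Matrix _ _ R) * diagonal (fun i => ϖ ^ e i) * (k₂ : Matrix _ _ R)) *
      (↑l₂⁻¹ : Matrix _ _ R) := by
    rw [h]; simp [Matrix.mul_assoc]
  have hdvd := ((((dvdMinors_diagonal_pow ϖ he hk).mul_left (k₁ : Matrix _ _ R)).mul_right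
    (k₂ : Matrix _ _ R)).mul_left (↑l₁⁻¹ : Matrix (Fin n) (Fin n) R)).mul_right
    (↑l₂⁻¹ : Matrix (Fin n) (Fin n) R) (Fin.rev ∘ Fin.castLE hk) (Fin.rev ∘ Fin.castLE hk)
  rw [← hD', submatrix_diagonal _ _ (Fin.rev_injective.comp (Fin.castLE_injective hk)),
    det_diagonal] at hdvd
  simp only [Function.comp_apply, Finset.prod_pow_eq_pow_sum] at hdvd
  exact (pow_dvd_pow_iff hϖ.ne_zero hϖ.not_isUnit).mp hdvd

theorem eq_of_mul_diagonal_pow_mul_eq (hϖ : Irreducible ϖ) {e e' : Fin n → ℕ}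
    (he : Antitone e) (he' : Antitone e') {k₁ k₂ l₁ l₂ : GL (Fin n) R}
    (h : (k₁ : Matrix (Fin n) (Fin n) R) * diagonal (fun i => ϖ ^ e i) * (k₂ : Matrix _ _ R) =
      (l₁ : Matrix (Fin n) (Fin n) R) * diagonal (fun i => ϖ ^ e' i) * (l₂ : Matrix _ _ R)) :
    e = e' := by
  have hrev : e ∘ Fin.rev = e' ∘ Fin.rev := Fin.eq_of_sum_castLE_eq fun k hk =>
    (sum_le_of_mul_diagonal_pow_mul_eq hϖ he h hk).antisymm
      (sum_le_of_mul_diagonal_pow_mul_eq hϖ he' h.symm hk)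
  exact Fin.revPerm.surjective.injective_comp_right hrev

end ElementaryDivisors

section Existence

theorem exists_eq_mul_diagonal_mul_of_mulVec_eq_smul {ι : Type*} [Fintype ι] [DecidableEq ι]
    (M : Matrix ι ι R) {b c : Module.Basis ι R (ι → R)} {d : ι → R}
    (h : ∀ i, M *ᵥ b i = d i • c i) : ∃ P Q : GL ι R, M = P * diagonal d * Q := by
  have hdiag : LinearMap.toMatrix b c (toLin' M) = diagonal d := by
    ext i j
    rw [LinearMap.toMatrix_apply, toLin'_apply, h, map_smul, c.repr_self, Finsupp.smul_single,
      smul_eq_mul, mul_one, Finsupp.single_apply, diagonal_apply]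
    grind
  refine ⟨⟨_, _, (Pi.basisFun R ι).toMatrix_mul_toMatrix_flip c,
      c.toMatrix_mul_toMatrix_flip (Pi.basisFun R ι)⟩,
    ⟨_, _, b.toMatrix_mul_toMatrix_flip (Pi.basisFun R ι),
      (Pi.basisFun R ι).toMatrix_mul_toMatrix_flip b⟩, ?_⟩
  rw [Units.val_mk, Units.val_mk, ← hdiag, basis_toMatrix_mul_linearMap_toMatrix_mul_basis_toMatrix,
    LinearMap.toMatrix_eq_toMatrix', LinearMap.toMatrix'_toLin']

theorem exists_eq_mul_diagonal_pow_mul [IsDomain R] [IsDiscreteValuationRing R] {ϖ : R}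
    (hϖ : Irreducible ϖ) {n : ℕ} (M : Matrix (Fin n) (Fin n) R) (hM : M.det ≠ 0) :
    ∃ (P Q : GL (Fin n) R) (e : Fin n → ℕ),
      Antitone e ∧ M = P * diagonal (fun i => ϖ ^ e i) * Q := by
  -- absorb the units into the basis `bM` and sort the exponents by reindexing both bases
  set φ := LinearEquiv.ofInjective (mulVecLin M) (mulVec_injective_of_det_ne_zero hM)
  obtain ⟨bM, d, bN, hsnf⟩ :=
    Submodule.exists_smith_normal_form_of_rank_eq (Pi.basisFun R (Fin n)) φ.finrank_eq.symm
  have hd : ∀ i, d i ≠ 0 := fun i hi => bN.ne_zero i (Subtype.ext (by simp [hsnf, hi]))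
  choose e u hu using fun i => IsDiscreteValuationRing.eq_unit_mul_pow_irreducible (hd i) hϖ
  set σ := Tuple.sort (OrderDual.toDual ∘ e)
  obtain ⟨P, Q, hPQ⟩ := exists_eq_mul_diagonal_mul_of_mulVec_eq_smul M
    (b := (bN.map φ.symm).reindex σ.symm) (c := (bM.unitsSMul u).reindex σ.symm)
    (d := fun i => ϖ ^ e (σ i)) fun i => by
      have : M *ᵥ φ.symm (bN (σ i)) = bN (σ i) := congrArg Subtype.val (φ.apply_symm_apply _)
      rw [Module.Basis.reindex_apply, Module.Basis.map_apply, Equiv.symm_symm, this, hsnf, hu,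
        Module.Basis.reindex_apply, Equiv.symm_symm, Module.Basis.unitsSMul_apply, Units.smul_def,
        mul_comm, mul_smul]
  exact ⟨P, Q, e ∘ σ, monotone_toDual_comp_iff.mp (Tuple.monotone_sort _), hPQ⟩

end Existence

end Matrix

section FractionField

variable {R : Type*} [CommRing R] {K : Type*} [Field K] [Algebra R K] {ϖ : R}

theorem pow_smul_cartanDiag_natCast_sub (hϖ : algebraMap R K ϖ ≠ 0) {n : ℕ} (e : Fin n → ℕ)
    (N : ℕ) : algebraMap R K ϖ ^ N • cartanDiag ϖ (fun i => (e i : ℤ) - N) =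
      (diagonal fun i => ϖ ^ e i).map (algebraMap R K) := by
  rw [cartanDiag, diagonal_map (map_zero _), ← diagonal_smul]
  congr 1
  ext i
  rw [Pi.smul_apply, smul_eq_mul, zpow_sub₀ hϖ, zpow_natCast, zpow_natCast, map_pow,
    mul_div_cancel₀ _ (pow_ne_zero _ hϖ)]

variable [IsDomain R] [IsFractionRing R K]

theorem eq_of_map_mul_cartanDiag_mul_eq (hϖ : Irreducible ϖ) {n : ℕ} {f f' : Fin n → ℤ}
    (hf : Antitone f) (hf' : Antitone f') {k₁ k₂ l₁ l₂ : GL (Fin n) R}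
    (h : (GeneralLinearGroup.map (algebraMap R K) k₁ : Matrix (Fin n) (Fin n) K) *
        cartanDiag ϖ f * (GeneralLinearGroup.map (algebraMap R K) k₂ : Matrix _ _ K) =
      (GeneralLinearGroup.map (algebraMap R K) l₁ : Matrix (Fin n) (Fin n) K) *
        cartanDiag ϖ f' * (GeneralLinearGroup.map (algebraMap R K) l₂ : Matrix _ _ K)) :
    f = f' := by
  have hϖK : algebraMap R K ϖ ≠ 0 :=
    (map_ne_zero_iff _ (IsFractionRing.injective R K)).mpr hϖ.ne_zero
  obtain ⟨N, e, e', rfl, rfl⟩ : ∃ (N : ℕ) (e e' : Fin n → ℕ),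
      f = (fun i => (e i : ℤ) - N) ∧ f' = fun i => (e' i : ℤ) - N := by
    obtain ⟨B, hB⟩ := Finite.exists_le fun i => max (-f i) (-f' i)
    refine ⟨B.toNat, fun i => (f i + B.toNat).toNat, fun i => (f' i + B.toNat).toNat,
      funext fun i => ?_, funext fun i => ?_⟩ <;> dsimp only <;> have := hB i <;> omega
  have he : Antitone e := fun i j hij => by simpa using hf hij
  have he' : Antitone e' := fun i j hij => by simpa using hf' hij
  have hR : (k₁ : Matrix (Fin n) (Fin n) R) * diagonal (fun i => ϖ ^ e i) * (k₂ : Matrix _ _ R) =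
      (l₁ : Matrix (Fin n) (Fin n) R) * diagonal (fun i => ϖ ^ e' i) * (l₂ : Matrix _ _ R) := by
    apply Matrix.map_injective (IsFractionRing.injective R K)
    simp only [GeneralLinearGroup.val_map_apply] at h
    simp only [Matrix.map_mul]
    rw [← pow_smul_cartanDiag_natCast_sub hϖK e N, ← pow_smul_cartanDiag_natCast_sub hϖK e' N,
      Matrix.mul_smul, Matrix.smul_mul, Matrix.mul_smul, Matrix.smul_mul, h]
  rw [Matrix.eq_of_mul_diagonal_pow_mul_eq hϖ he he' hR]

variable [IsDiscreteValuationRing R]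

theorem exists_map_eq_pow_smul (hϖ : Irreducible ϖ) {ι : Type*} [Fintype ι] (g : Matrix ι ι K) :
    ∃ (N : ℕ) (M : Matrix ι ι R), M.map (algebraMap R K) = algebraMap R K ϖ ^ N • g := by
  obtain ⟨⟨b, hb⟩, hint⟩ := IsLocalization.exist_integer_multiples (nonZeroDivisors R)
    Finset.univ fun p : ι × ι => g p.1 p.2
  obtain ⟨N, u, rfl⟩ :=
    IsDiscreteValuationRing.eq_unit_mul_pow_irreducible (nonZeroDivisors.ne_zero hb) hϖ
  choose M hM using fun i j => hint (i, j) (Finset.mem_univ _)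
  refine ⟨N, of fun i j => ↑u⁻¹ * M i j, ?_⟩
  have hu : algebraMap R K u ≠ 0 := (u.isUnit.map _).ne_zero
  ext i j
  simp [hM, Algebra.smul_def, hu, mul_assoc]

theorem exists_eq_map_mul_cartanDiag_mul (hϖ : Irreducible ϖ) {n : ℕ} (g : GL (Fin n) K) :
    ∃ f : Fin n → ℤ, Antitone f ∧ ∃ k₁ k₂ : GL (Fin n) R,
      (g : Matrix (Fin n) (Fin n) K) =
        (GeneralLinearGroup.map (algebraMap R K) k₁ : Matrix (Fin n) (Fin n) K) *
          cartanDiag ϖ f * (GeneralLinearGroup.map (algebraMap R K) k₂ : Matrix _ _ K) := by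
  have hϖK : algebraMap R K ϖ ≠ 0 :=
    (map_ne_zero_iff _ (IsFractionRing.injective R K)).mpr hϖ.ne_zero
  obtain ⟨N, M, hM⟩ := exists_map_eq_pow_smul hϖ (g : Matrix (Fin n) (Fin n) K)
  have hMdet : M.det ≠ 0 := by
    rw [← (map_ne_zero_iff _ (IsFractionRing.injective R K)), RingHom.map_det,
      RingHom.mapMatrix_apply, hM, det_smul]
    exact mul_ne_zero (pow_ne_zero _ (pow_ne_zero _ hϖK)) (isUnits_det_units g).ne_zero
  obtain ⟨P, Q, e, he, rfl⟩ := exists_eq_mul_diagonal_pow_mul hϖ M hMdet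
  refine ⟨fun i => e i - N, fun i j hij => by simpa using he hij, P, Q, ?_⟩
  apply smul_right_injective _ (pow_ne_zero N hϖK)
  dsimp only
  rw [GeneralLinearGroup.val_map_apply, GeneralLinearGroup.val_map_apply, ← hM, ← Matrix.smul_mul,
    ← Matrix.mul_smul, pow_smul_cartanDiag_natCast_sub hϖK, Matrix.map_mul, Matrix.map_mul]

end FractionField

/-- **Cartan decomposition.** Let `R` be a discrete valuation ring with uniformiser
`ϖ` and fraction field `K`. Then `GLₙ(K)` is the disjoint union over antitone `f : Fin n → ℤ`
of the double cosets `GLₙ(R) ⬝ diag (ϖ ^ f) ⬝ GLₙ(R)`: every `g ∈ GLₙ(K)` lies in exactly one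
such double coset. -/
theorem cartan_decomposition {R : Type*} [CommRing R] [IsDomain R]
    [IsDiscreteValuationRing R] {K : Type*} [Field K] [Algebra R K] [IsFractionRing R K]
    (ϖ : R) (hϖ : Irreducible ϖ) {n : ℕ} (g : GL (Fin n) K) :
    ∃! f : {f : Fin n → ℤ // Antitone f},
      ∃ k₁ k₂ : GL (Fin n) R,
        (g : Matrix (Fin n) (Fin n) K) =
          (((Matrix.GeneralLinearGroup.map (n := Fin n) (algebraMap R K)) k₁ :
              Matrix (Fin n) (Fin n) K)) * cartanDiag ϖ f.val *
            ((Matrix.GeneralLinearGroup.map (n := Fin n) (algebraMap R K)) k₂ :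
              Matrix (Fin n) (Fin n) K) := by
  obtain ⟨f, hf, k₁, k₂, hg⟩ := exists_eq_map_mul_cartanDiag_mul hϖ g
  refine ⟨⟨f, hf⟩, ⟨k₁, k₂, hg⟩, fun ⟨f', hf'⟩ ⟨l₁, l₂, hg'⟩ => ?_⟩
  exact Subtype.ext (eq_of_map_mul_cartanDiag_mul_eq hϖ hf' hf (hg'.symm.trans hg))
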